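/- Suppose u ∈ ℤ[X] is nilpotent at 0 with nilpotency index m and u(0) ≠ 0. Setting u₀ := u(0) and uₙ := u^{(n+1)}(0) − u^{(n)}(0) for n ≥ 1, one has uₙ divides uₙ₊₁ for all n ≥ 0, u_m = u₀, hence |uₙ| = |u₀| for all 0 ≤ n ≤ m; moreover u₀ + u₁ + ⋯ + u_{m−1} = 0 and m is even. -/

import Mathlib

open Polynomial

/-- The `n`-th compositional iterate of the polynomial `u`, evaluated at `r`. -/
def iterEval (u : Polynomial ℤ) (n : ℕ) (r : ℤ) : ℤ :=
  (fun x => Polynomial.eval x u)^[n] r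

/-- `u` is weakly locally nilpotent at `r` outside `A`: for every prime `p ∉ A`
there is `m ≥ 1` with `p ∣ u^{(m)}(r)`. -/
def WeaklyLocallyNilpotentAt (u : Polynomial ℤ) (r : ℤ) (A : Set ℕ) : Prop :=
  ∀ p : ℕ, Nat.Prime p → p ∉ A → ∃ m : ℕ, 1 ≤ m ∧ (p : ℤ) ∣ iterEval u m r

/-- `u` is locally nilpotent at `r`: for every prime `p` there is `m ≥ 1`
with `p ∣ u^{(m)}(r)`. -/
def LocallyNilpotentAt (u : Polynomial ℤ) (r : ℤ) : Prop :=
  ∀ p : ℕ, Nat.Prime p → ∃ m : ℕ, 1 ≤ m ∧ (p : ℤ) ∣ iterEval u m r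

/-- `u` is nilpotent at `r`: some iterate `u^{(n)}(r)` (with `n ≥ 1`) equals `0`. -/
def IsNilpotentAt (u : Polynomial ℤ) (r : ℤ) : Prop :=
  ∃ n : ℕ, 1 ≤ n ∧ iterEval u n r = 0

/-- `u` is nilpotent at `r` with nilpotency index exactly `i`. -/
def NilpotentOfIndex (u : Polynomial ℤ) (r : ℤ) (i : ℕ) : Prop :=
  1 ≤ i ∧ iterEval u i r = 0 ∧ ∀ m : ℕ, 1 ≤ m → m < i → iterEval u m r ≠ 0

/-!
Since `a - b ∣ u(a) - u(b)` for an integer polynomial, each difference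
`dₙ = u^{(n+1)}(r) - u^{(n)}(r)` of the orbit of `r` divides the next one. If the orbit
returns to `r` after `m` steps (for `r = 0` this is nilpotency of index `m`), then
`dₘ = d₀`, so `d₀ ∣ dₙ ∣ d₀` for all `n ≤ m`: every difference is `±d₀`. The first `m`
differences telescope to `u^{(m)}(r) - r = 0`, and a vanishing sum of `m` terms `±d₀` with
`d₀ ≠ 0` has as many plus as minus signs, so `m` is even.
-/

theorem even_card_of_sum_eq_zero_of_abs_eq {ι : Type*} (s : Finset ι) (x : ι → ℤ) {a : ℤ}
    (ha : a ≠ 0) (habs : ∀ i ∈ s, |x i| = |a|) (hsum : ∑ i ∈ s, x i = 0) : Even s.card := by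
  have hterm : ∀ i ∈ s, 2 * a ∣ a - x i := fun i hi => by
    rcases abs_eq_abs.mp (habs i hi) with h | h <;> rw [h]
    · simp
    · exact ⟨1, by ring⟩
  have hcard : ∑ i ∈ s, (a - x i) = s.card * a := by
    rw [Finset.sum_sub_distrib, hsum, sub_zero, Finset.sum_const, nsmul_eq_mul]
  have h2 : (2 : ℤ) ∣ s.card := by
    rw [← mul_dvd_mul_iff_right ha, ← hcard]
    exact Finset.dvd_sum hterm
  exact even_iff_two_dvd.mpr (Int.natCast_dvd_natCast.mp h2)

section Orbit

variable (u : ℤ[X]) (r : ℤ)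

theorem iterEval_zero : iterEval u 0 r = r := rfl

theorem iterEval_succ (n : ℕ) : iterEval u (n + 1) r = u.eval (iterEval u n r) :=
  Function.iterate_succ_apply' _ n r

def iterDiff (n : ℕ) : ℤ := iterEval u (n + 1) r - iterEval u n r

theorem iterDiff_zero : iterDiff u r 0 = u.eval r - r := by
  rw [iterDiff, iterEval_succ, iterEval_zero]

theorem iterDiff_dvd_iterDiff_succ (n : ℕ) : iterDiff u r n ∣ iterDiff u r (n + 1) := by
  rw [iterDiff, iterDiff, iterEval_succ u r (n + 1), iterEval_succ u r n]
  exact sub_dvd_eval_sub _ _ u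

theorem iterDiff_dvd_iterDiff_of_le {a b : ℕ} (hab : a ≤ b) : iterDiff u r a ∣ iterDiff u r b := by
  induction b, hab using Nat.le_induction with
  | base => exact dvd_rfl
  | succ b _ ih => exact ih.trans (iterDiff_dvd_iterDiff_succ u r b)

theorem sum_range_iterDiff (n : ℕ) : ∑ i ∈ Finset.range n, iterDiff u r i = iterEval u n r - r :=
  Finset.sum_range_sub (fun i => iterEval u i r) n

variable {u r} {m : ℕ}

theorem iterDiff_eq_iterDiff_zero_of_iterEval_eq_self (hm : iterEval u m r = r) : iterDiff u r m = iterDiff u r 0 := by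
  rw [iterDiff, iterEval_succ, hm, iterDiff_zero]

theorem abs_iterDiff_eq_of_iterEval_eq_self (hm : iterEval u m r = r) {n : ℕ} (hn : n ≤ m) :
    |iterDiff u r n| = |iterDiff u r 0| := by
  have hdvd : iterDiff u r n ∣ iterDiff u r 0 := by
    rw [← iterDiff_eq_iterDiff_zero_of_iterEval_eq_self hm]
    exact iterDiff_dvd_iterDiff_of_le u r hn
  exact abs_eq_abs.mpr (Int.associated_iff.mp
    (associated_of_dvd_dvd hdvd (iterDiff_dvd_iterDiff_of_le u r n.zero_le)))

theorem sum_range_iterDiff_eq_zero_of_iterEval_eq_self (hm : iterEval u m r = r) :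
    ∑ i ∈ Finset.range m, iterDiff u r i = 0 := by
  rw [sum_range_iterDiff, hm, sub_self]

theorem even_of_iterEval_eq_self (hm : iterEval u m r = r) (hr : u.eval r ≠ r) : Even m := by
  simpa using even_card_of_sum_eq_zero_of_abs_eq (Finset.range m) (iterDiff u r)
    (by rwa [iterDiff_zero, sub_ne_zero])
    (fun i hi => abs_iterDiff_eq_of_iterEval_eq_self hm (Finset.mem_range.mp hi).le)
    (sum_range_iterDiff_eq_zero_of_iterEval_eq_self hm)

end Orbit

theorem successive_differences_at_zero (u : Polynomial ℤ) (m : ℕ)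
    (h : NilpotentOfIndex u 0 m) (h0 : u.eval 0 ≠ 0) :
    (∀ n : ℕ, (iterEval u (n + 1) 0 - iterEval u n 0) ∣
        (iterEval u (n + 2) 0 - iterEval u (n + 1) 0)) ∧
    iterEval u (m + 1) 0 - iterEval u m 0 = u.eval 0 ∧
    (∀ n : ℕ, n ≤ m → |iterEval u (n + 1) 0 - iterEval u n 0| = |u.eval 0|) ∧
    (∑ i ∈ Finset.range m, (iterEval u (i + 1) 0 - iterEval u i 0)) = 0 ∧
    Even m := by
  have hm : iterEval u m 0 = 0 := h.2.1
  have hd₀ : iterDiff u 0 0 = u.eval 0 := by rw [iterDiff_zero, sub_zero]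
  refine ⟨iterDiff_dvd_iterDiff_succ u 0, ?_, fun n hn => ?_,
    sum_range_iterDiff_eq_zero_of_iterEval_eq_self hm, even_of_iterEval_eq_self hm h0⟩
  · exact (iterDiff_eq_iterDiff_zero_of_iterEval_eq_self hm).trans hd₀
  · exact (abs_iterDiff_eq_of_iterEval_eq_self hm hn).trans (congrArg abs hd₀)
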